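/- arXiv:2407.05488 — 4 statements merged into one kernel-verified Lean document; each statement's English description precedes it below -/
import Mathlib

section
/- Let T>0, let η:[0,T]→[0,∞) be absolutely continuous with η(0)=η₀≥0, let φ,ψ,y:[0,T]→[0,∞) be Lebesgue integrable, and let b,c>0 be real constants. Suppose η'(t) + b·y(t) ≤ (c·y(t) + φ(t))·η(t) + ψ(t) for almost every t∈[0,T]. Set Φ(s) := ∫₀ˢ φ(τ)dτ. If D := η₀ + ∫₀ᵀ e^{−Φ(τ)} ψ(τ) dτ < (b/c)·e^{−1−Φ(T)}, then sup_{0≤τ≤T} η(τ) < b/c and ∫₀ᵀ y(τ)dτ < 1/c. -/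
/-!
Multiplying by the integrating factor `e^{-G}`, `G = ∫ g`, and integrating by parts (everything is
absolutely continuous) turns `w' + k ≤ g w + h` into
`e^{-G(b)} w(b) + ∫ e^{-G} k ≤ w(a) + ∫ e^{-G} h`.

As long as `η < b/c`, the term `c y η` is absorbed by `b y`, and the estimate with `g = φ` gives
`η ≤ D e^{Φ(T)} < (b/c) e^{-1}`; a first-crossing argument therefore keeps `η` below `b/c` on all
of `[0, T]`. With `g = φ + c y` and `k = b y` instead, and `Y = ∫ c y`, it gives
`(b/c) e^{-Φ(T)} (1 - e^{-Y(T)}) ≤ b ∫ e^{-Φ-Y} y ≤ D`, because `∫ c y e^{-Y} = 1 - e^{-Y(T)}`.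
Hence `1 - e^{-Y(T)} < e^{-1} < 1 - e^{-1}` (as `e > 2`), i.e. `Y(T) < 1`.
-/

open MeasureTheory Set Filter intervalIntegral

namespace AbsolutelyContinuousOnInterval

variable {X : Type*} [PseudoMetricSpace X] {a b : ℝ}

theorem congr {f g : ℝ → X} (hf : AbsolutelyContinuousOnInterval f a b)
    (hfg : EqOn f g (uIcc a b)) : AbsolutelyContinuousOnInterval g a b := by
  rw [absolutelyContinuousOnInterval_iff] at hf ⊢
  intro ε hε
  obtain ⟨δ, hδ, hfδ⟩ := hf ε hε
  refine ⟨δ, hδ, fun E hE hEδ => ?_⟩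
  convert hfδ E hE hEδ using 1
  refine Finset.sum_congr rfl fun i hi => ?_
  rw [hfg (hE.1 i hi).1, hfg (hE.1 i hi).2]

end AbsolutelyContinuousOnInterval

theorem LipschitzOnWith.comp_absolutelyContinuousOnInterval {X Y : Type*} [PseudoMetricSpace X]
    [PseudoMetricSpace Y] {f : ℝ → X} {h : X → Y} {K : NNReal} {s : Set X} {a b : ℝ}
    (hh : LipschitzOnWith K h s) (hf : AbsolutelyContinuousOnInterval f a b)
    (hfs : MapsTo f (uIcc a b) s) : AbsolutelyContinuousOnInterval (h ∘ f) a b := by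
  rw [absolutelyContinuousOnInterval_iff] at hf ⊢
  intro ε hε
  obtain ⟨δ, hδ, hfδ⟩ := hf (ε / (K + 1)) (by positivity)
  refine ⟨δ, hδ, fun E hE hEδ => ?_⟩
  calc ∑ i ∈ Finset.range E.1, dist ((h ∘ f) (E.2 i).1) ((h ∘ f) (E.2 i).2)
      ≤ ∑ i ∈ Finset.range E.1, K * dist (f (E.2 i).1) (f (E.2 i).2) := by
        gcongr with i hi
        exact hh.dist_le_mul _ (hfs (hE.1 i hi).1) _ (hfs (hE.1 i hi).2)
    _ = K * ∑ i ∈ Finset.range E.1, dist (f (E.2 i).1) (f (E.2 i).2) := by rw [Finset.mul_sum]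
    _ ≤ K * (ε / (K + 1)) := by gcongr; exact (hfδ E hE hEδ).le
    _ < ε := by
        rw [mul_div_assoc', div_lt_iff₀ (by positivity)]
        nlinarith

theorem AbsolutelyContinuousOnInterval.exp {f : ℝ → ℝ} {a b : ℝ}
    (hf : AbsolutelyContinuousOnInterval f a b) :
    AbsolutelyContinuousOnInterval (fun x => Real.exp (f x)) a b := by
  obtain ⟨C, hC⟩ := hf.exists_bound
  obtain ⟨K, hK⟩ := (Real.contDiff_exp.contDiffOn (s := Icc (-C) C)).exists_lipschitzOnWith
    one_ne_zero (convex_Icc _ _) isCompact_Icc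
  exact hK.comp_absolutelyContinuousOnInterval hf fun x hx => abs_le.mp (hC x hx)

theorem absolutelyContinuousOnInterval_of_eq_add_integral {w w' : ℝ → ℝ} {a b : ℝ} (hab : a ≤ b)
    (hw' : IntervalIntegrable w' volume a b) (hw : ∀ t ∈ Icc a b, w t = w a + ∫ s in a..t, w' s) :
    AbsolutelyContinuousOnInterval w a b ∧ ∀ᵐ t, t ∈ Ioo a b → deriv w t = w' t := by
  constructor
  · refine (((LipschitzWith.const (w a)).lipschitzOnWith.absolutelyContinuousOnInterval).add
      (hw'.absolutelyContinuousOnInterval_intervalIntegral left_mem_uIcc)).congr ?_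
    rw [uIcc_of_le hab]
    exact fun t ht => (hw t ht).symm
  · filter_upwards [hw'.ae_hasDerivAt_integral] with t ht hmem
    have hprimitive := ht (Icc_subset_uIcc (Ioo_subset_Icc_self hmem)) a left_mem_uIcc
    exact ((hprimitive.const_add (w a)).congr_of_eventuallyEq
      (eventually_of_mem (Icc_mem_nhds hmem.1 hmem.2) hw)).deriv

section IntegratingFactor

variable {a b : ℝ} {g : ℝ → ℝ}

theorem IntervalIntegrable.absolutelyContinuousOnInterval_exp_neg_integral
    (hg : IntervalIntegrable g volume a b) :
    AbsolutelyContinuousOnInterval (fun x => Real.exp (-∫ v in a..x, g v)) a b :=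
  (hg.absolutelyContinuousOnInterval_intervalIntegral left_mem_uIcc).neg.exp

theorem IntervalIntegrable.ae_hasDerivAt_exp_neg_integral (hg : IntervalIntegrable g volume a b) :
    ∀ᵐ x, x ∈ uIcc a b → HasDerivAt (fun x => Real.exp (-∫ v in a..x, g v))
      (Real.exp (-∫ v in a..x, g v) * -g x) x := by
  filter_upwards [hg.ae_hasDerivAt_integral] with x hx hmem
  exact (hx hmem a left_mem_uIcc).neg.exp

theorem IntervalIntegrable.integral_mul_exp_neg_integral (hg : IntervalIntegrable g volume a b) :
    ∫ u in a..b, g u * Real.exp (-∫ v in a..u, g v) = 1 - Real.exp (-∫ v in a..b, g v) := by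
  calc ∫ u in a..b, g u * Real.exp (-∫ v in a..u, g v)
      = -∫ u in a..b, deriv (fun x => Real.exp (-∫ v in a..x, g v)) u := by
        rw [← intervalIntegral.integral_neg]
        refine integral_congr_ae ?_
        filter_upwards [hg.ae_hasDerivAt_exp_neg_integral] with u hu hmem
        rw [(hu (uIoc_subset_uIcc hmem)).deriv]
        ring
    _ = 1 - Real.exp (-∫ v in a..b, g v) := by
        rw [hg.absolutelyContinuousOnInterval_exp_neg_integral.integral_deriv_eq_sub]
        simp

theorem AbsolutelyContinuousOnInterval.exp_neg_integral_mul_add_integral_le {w h k : ℝ → ℝ}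
    (hw : AbsolutelyContinuousOnInterval w a b) (hab : a ≤ b)
    (hg : IntervalIntegrable g volume a b) (hh : IntervalIntegrable h volume a b)
    (hk : IntervalIntegrable k volume a b)
    (hineq : ∀ᵐ u, u ∈ Ioo a b → deriv w u + k u ≤ g u * w u + h u) :
    Real.exp (-∫ v in a..b, g v) * w b + ∫ u in a..b, Real.exp (-∫ v in a..u, g v) * k u
      ≤ w a + ∫ u in a..b, Real.exp (-∫ v in a..u, g v) * h u := by
  have hE := hg.absolutelyContinuousOnInterval_exp_neg_integral
  have hproduct := hE.integral_deriv_mul_eq_sub hw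
  simp only [integral_same, neg_zero, Real.exp_zero, one_mul] at hproduct
  set E : ℝ → ℝ := fun x => Real.exp (-∫ v in a..x, g v)
  have hEk : IntervalIntegrable (fun u => E u * k u) volume a b :=
    hk.continuousOn_mul hE.continuousOn
  rw [← sub_le_iff_le_add', add_sub_right_comm, ← hproduct, ← intervalIntegral.integral_add]
  · refine integral_mono_ae_restrict hab
      (((hE.intervalIntegrable_deriv.mul_continuousOn hw.continuousOn).add
        (hw.intervalIntegrable_deriv.continuousOn_mul hE.continuousOn)).add hEk)
      (hh.continuousOn_mul hE.continuousOn) ?_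
    rw [EventuallyLE, Measure.restrict_congr_set Ioo_ae_eq_Icc.symm,
      ae_restrict_iff' measurableSet_Ioo]
    filter_upwards [hineq, hg.ae_hasDerivAt_exp_neg_integral] with u hu hEu hmem
    rw [(hEu (Icc_subset_uIcc (Ioo_subset_Icc_self hmem))).deriv]
    calc E u * -g u * w u + E u * deriv w u + E u * k u
        = E u * (deriv w u + k u - g u * w u) := by ring
      _ ≤ E u * h u := by gcongr; linarith [hu hmem]
  · exact (hE.intervalIntegrable_deriv.mul_continuousOn hw.continuousOn).add
      (hw.intervalIntegrable_deriv.continuousOn_mul hE.continuousOn)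
  · exact hEk

end IntegratingFactor

theorem integral_le_integral_of_mem_Icc {f : ℝ → ℝ} {a b t : ℝ}
    (hf : IntervalIntegrable f volume a b) (hf0 : ∀ u ∈ Icc a b, 0 ≤ f u) (ht : t ∈ Icc a b) :
    ∫ u in a..t, f u ≤ ∫ u in a..b, f u :=
  integral_mono_interval le_rfl ht.1 ht.2
    (ae_restrict_of_forall_mem measurableSet_Ioc fun u hu => hf0 u (Ioc_subset_Icc_self hu)) hf

theorem exp_neg_integral_mul_one_sub_le_integral {f g : ℝ → ℝ} {a b : ℝ} (hab : a ≤ b)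
    (hf : IntervalIntegrable f volume a b) (hg : IntervalIntegrable g volume a b)
    (hf0 : ∀ u ∈ Icc a b, 0 ≤ f u) (hg0 : ∀ u ∈ Icc a b, 0 ≤ g u) :
    Real.exp (-∫ v in a..b, f v) * (1 - Real.exp (-∫ v in a..b, g v))
      ≤ ∫ u in a..b, Real.exp (-∫ v in a..u, f v + g v) * g u := by
  rw [← hg.integral_mul_exp_neg_integral, ← intervalIntegral.integral_const_mul]
  refine integral_mono_on hab
    ((hg.mul_continuousOn
      hg.absolutelyContinuousOnInterval_exp_neg_integral.continuousOn).const_mul _)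
    (hg.continuousOn_mul (hf.add hg).absolutelyContinuousOnInterval_exp_neg_integral.continuousOn)
    fun u hu => ?_
  have hsub : uIcc a u ⊆ uIcc a b := uIcc_subset_uIcc left_mem_uIcc (Icc_subset_uIcc hu)
  rw [intervalIntegral.integral_add (hf.mono_set hsub) (hg.mono_set hsub), neg_add, Real.exp_add]
  have hexp : Real.exp (-∫ v in a..b, f v) ≤ Real.exp (-∫ v in a..u, f v) :=
    Real.exp_le_exp.2 (neg_le_neg (integral_le_integral_of_mem_Icc hf hf0 hu))
  calc Real.exp (-∫ v in a..b, f v) * (g u * Real.exp (-∫ v in a..u, g v))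
      ≤ Real.exp (-∫ v in a..u, f v) * (g u * Real.exp (-∫ v in a..u, g v)) := by
        gcongr
        exact mul_nonneg (hg0 u hu) (Real.exp_pos _).le
    _ = _ := by ring

theorem forall_lt_of_forall_Ico_lt {α β : Type*} [ConditionallyCompleteLinearOrder α]
    [TopologicalSpace α] [OrderTopology α] [LinearOrder β] [TopologicalSpace β]
    [ClosedIciTopology β] {f : α → β} {a b : α} {K : β} (hf : ContinuousOn f (Icc a b))
    (hstep : ∀ t ∈ Icc a b, (∀ u ∈ Ico a t, f u < K) → f t < K) : ∀ t ∈ Icc a b, f t < K := by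
  by_contra! hcross
  set S := Icc a b ∩ f ⁻¹' Ici K
  have hS : IsClosed S := hf.preimage_isClosed_of_isClosed isClosed_Icc isClosed_Ici
  have hbdd : BddBelow S := ⟨a, fun x hx => hx.1.1⟩
  obtain ⟨hmem, hK⟩ := hS.csInf_mem hcross hbdd
  refine (hstep _ hmem fun u hu => ?_).not_ge hK
  by_contra! hKu
  exact hu.2.not_ge (csInf_le hbdd ⟨⟨hu.1, hu.2.le.trans hmem.2⟩, hKu⟩)

section Smallness

variable {T b c : ℝ} {η φ ψ y : ℝ → ℝ}

theorem gronwall_smallness_forall_lt (hT : 0 ≤ T) (hb : 0 < b) (hc : 0 < c)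
    (hη : AbsolutelyContinuousOnInterval η 0 T)
    (hφ : IntervalIntegrable φ volume 0 T) (hψ : IntervalIntegrable ψ volume 0 T)
    (hφ0 : ∀ t ∈ Icc 0 T, 0 ≤ φ t) (hψ0 : ∀ t ∈ Icc 0 T, 0 ≤ ψ t) (hy0 : ∀ t ∈ Icc 0 T, 0 ≤ y t)
    (hineq : ∀ᵐ t, t ∈ Ioo 0 T → deriv η t + b * y t ≤ (c * y t + φ t) * η t + ψ t)
    (hD : η 0 + ∫ τ in 0..T, Real.exp (-∫ σ in 0..τ, φ σ) * ψ τ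
      < b / c * Real.exp (-(1 + ∫ σ in 0..T, φ σ))) :
    ∀ t ∈ Icc 0 T, η t < b / c := by
  refine forall_lt_of_forall_Ico_lt (uIcc_of_le hT ▸ hη.continuousOn) fun t ht hlt => ?_
  have hsub : uIcc 0 t ⊆ uIcc 0 T := uIcc_subset_uIcc left_mem_uIcc (Icc_subset_uIcc ht)
  have hgronwall := (hη.mono hsub).exp_neg_integral_mul_add_integral_le ht.1 (hφ.mono_set hsub)
    (hψ.mono_set hsub) (k := fun _ => 0) intervalIntegrable_const (by
      filter_upwards [hineq] with u hu hmem
      have hηu : c * η u ≤ b := (lt_div_iff₀' hc).1 (hlt u ⟨hmem.1.le, hmem.2⟩) |>.le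
      have := hu ⟨hmem.1, hmem.2.trans_le ht.2⟩
      nlinarith [hy0 u ⟨hmem.1.le, hmem.2.le.trans ht.2⟩])
  simp only [mul_zero, intervalIntegral.integral_zero, add_zero] at hgronwall
  have hEψ : IntervalIntegrable (fun τ => Real.exp (-∫ σ in 0..τ, φ σ) * ψ τ) volume 0 T :=
    hψ.continuousOn_mul hφ.absolutelyContinuousOnInterval_exp_neg_integral.continuousOn
  have hψle := integral_le_integral_of_mem_Icc hEψ
    (fun τ hτ => mul_nonneg (Real.exp_pos _).le (hψ0 τ hτ)) ht
  have hexp : Real.exp (-∫ σ in 0..T, φ σ) ≤ Real.exp (-∫ σ in 0..t, φ σ) :=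
    Real.exp_le_exp.2 (neg_le_neg (integral_le_integral_of_mem_Icc hφ hφ0 ht))
  have hsmall : η t < b / c * Real.exp (-1) := by
    refine lt_of_mul_lt_mul_left ?_ (Real.exp_pos (-∫ σ in 0..t, φ σ)).le
    calc Real.exp (-∫ σ in 0..t, φ σ) * η t
        ≤ η 0 + ∫ τ in 0..T, Real.exp (-∫ σ in 0..τ, φ σ) * ψ τ := by
          linarith
      _ < b / c * Real.exp (-1) * Real.exp (-∫ σ in 0..T, φ σ) := by
          rwa [mul_assoc, ← Real.exp_add, ← neg_add]
      _ ≤ Real.exp (-∫ σ in 0..t, φ σ) * (b / c * Real.exp (-1)) := by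
          rw [mul_comm]; gcongr
  calc η t < b / c * Real.exp (-1) := hsmall
    _ ≤ b / c := mul_le_of_le_one_right (div_pos hb hc).le (Real.exp_le_one_iff.2 (by norm_num))

theorem gronwall_smallness_integral_lt (hT : 0 ≤ T) (hb : 0 < b) (hc : 0 < c)
    (hη : AbsolutelyContinuousOnInterval η 0 T) (hηT : 0 ≤ η T)
    (hφ : IntervalIntegrable φ volume 0 T) (hψ : IntervalIntegrable ψ volume 0 T)
    (hy : IntervalIntegrable y volume 0 T)
    (hφ0 : ∀ t ∈ Icc 0 T, 0 ≤ φ t) (hψ0 : ∀ t ∈ Icc 0 T, 0 ≤ ψ t) (hy0 : ∀ t ∈ Icc 0 T, 0 ≤ y t)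
    (hineq : ∀ᵐ t, t ∈ Ioo 0 T → deriv η t + b * y t ≤ (c * y t + φ t) * η t + ψ t)
    (hD : η 0 + ∫ τ in 0..T, Real.exp (-∫ σ in 0..τ, φ σ) * ψ τ
      < b / c * Real.exp (-(1 + ∫ σ in 0..T, φ σ))) :
    ∫ τ in 0..T, y τ < 1 / c := by
  have hcy : IntervalIntegrable (fun t => c * y t) volume 0 T := hy.const_mul c
  have hcy0 : ∀ t ∈ Icc 0 T, 0 ≤ c * y t := fun t ht => mul_nonneg hc.le (hy0 t ht)
  have hgronwall := hη.exp_neg_integral_mul_add_integral_le hT (hφ.add hcy) hψ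
    (hcy.const_mul (b / c)) (by
      filter_upwards [hineq] with u hu hmem
      have := hu hmem
      rw [← mul_assoc, div_mul_cancel₀ b hc.ne']
      linarith)
  set W : ℝ → ℝ := fun u => Real.exp (-∫ v in 0..u, φ v + c * y v)
  have hW : ContinuousOn W (uIcc 0 T) :=
    (hφ.add hcy).absolutelyContinuousOnInterval_exp_neg_integral.continuousOn
  have hψle : ∫ u in 0..T, W u * ψ u ≤ ∫ u in 0..T, Real.exp (-∫ σ in 0..u, φ σ) * ψ u := by
    refine integral_mono_on hT (hψ.continuousOn_mul hW)
      (hψ.continuousOn_mul hφ.absolutelyContinuousOnInterval_exp_neg_integral.continuousOn)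
      fun u hu => mul_le_mul_of_nonneg_right (Real.exp_le_exp.2 (neg_le_neg ?_)) (hψ0 u hu)
    have hsub : uIcc 0 u ⊆ uIcc 0 T := uIcc_subset_uIcc left_mem_uIcc (Icc_subset_uIcc hu)
    exact integral_mono_on hu.1 (hφ.mono_set hsub) ((hφ.add hcy).mono_set hsub) fun v hv =>
      le_add_of_nonneg_right (hcy0 v ⟨hv.1, hv.2.trans hu.2⟩)
  have hdissipation : ∫ u in 0..T, W u * (b / c * (c * y u))
      = b / c * ∫ u in 0..T, W u * (c * y u) := by
    rw [← intervalIntegral.integral_const_mul]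
    simp only [mul_left_comm]
  have hlow := exp_neg_integral_mul_one_sub_le_integral hT hφ hcy hφ0 hcy0
  have hgap : 1 - Real.exp (-∫ v in 0..T, c * y v) < Real.exp (-1) := by
    refine lt_of_mul_lt_mul_left ?_ (Real.exp_pos (-∫ σ in 0..T, φ σ)).le
    refine lt_of_mul_lt_mul_left ?_ (div_pos hb hc).le
    calc b / c * (Real.exp (-∫ σ in 0..T, φ σ) * (1 - Real.exp (-∫ v in 0..T, c * y v)))
        ≤ b / c * ∫ u in 0..T, W u * (c * y u) := by gcongr
      _ ≤ η 0 + ∫ τ in 0..T, Real.exp (-∫ σ in 0..τ, φ σ) * ψ τ := by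
          linarith [mul_nonneg (Real.exp_pos (-∫ v in 0..T, φ v + c * y v)).le hηT]
      _ < b / c * (Real.exp (-∫ σ in 0..T, φ σ) * Real.exp (-1)) := by
          rwa [mul_comm (Real.exp _), ← Real.exp_add, ← neg_add]
  have hexp_neg_one : Real.exp (-1) < 1 / 2 := by
    rw [Real.exp_neg, inv_lt_comm₀ (Real.exp_pos 1) (by norm_num)]
    linarith [Real.exp_one_gt_d9]
  have hcyT : ∫ v in 0..T, c * y v < 1 := by
    have := Real.exp_lt_exp.1 (show Real.exp (-1) < Real.exp (-∫ v in 0..T, c * y v) by linarith)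
    linarith
  rw [intervalIntegral.integral_const_mul] at hcyT
  exact (lt_div_iff₀' hc).2 hcyT

end Smallness

theorem gronwall_smallness_phi_general
    (T : ℝ) (hT : 0 < T)
    (η η' φ ψ y : ℝ → ℝ) (b c η₀ : ℝ)
    (hb : 0 < b) (hc : 0 < c)
    (hη_nonneg : ∀ t ∈ Set.Icc (0 : ℝ) T, 0 ≤ η t)
    (hη : ∀ t ∈ Set.Icc (0 : ℝ) T, η t = η 0 + ∫ s in (0 : ℝ)..t, η' s)
    (hη0 : η 0 = η₀)
    (hη'int : IntervalIntegrable η' volume 0 T)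
    (hφint : IntervalIntegrable φ volume 0 T)
    (hψint : IntervalIntegrable ψ volume 0 T)
    (hyint : IntervalIntegrable y volume 0 T)
    (hφ0 : ∀ t ∈ Set.Icc (0 : ℝ) T, 0 ≤ φ t)
    (hψ0 : ∀ t ∈ Set.Icc (0 : ℝ) T, 0 ≤ ψ t)
    (hy0 : ∀ t ∈ Set.Icc (0 : ℝ) T, 0 ≤ y t)
    (hineq : ∀ᵐ t ∂(volume.restrict (Set.Icc (0 : ℝ) T)),
      η' t + b * y t ≤ (c * y t + φ t) * η t + ψ t)
    (hD : η₀ + (∫ τ in (0 : ℝ)..T, Real.exp (-(∫ σ in (0 : ℝ)..τ, φ σ)) * ψ τ)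
        < b / c * Real.exp (-(1 + ∫ σ in (0 : ℝ)..T, φ σ))) :
    sSup (η '' Set.Icc (0 : ℝ) T) < b / c ∧
    (∫ τ in (0 : ℝ)..T, y τ) < 1 / c := by
  obtain ⟨hη_ac, hη_deriv⟩ := absolutelyContinuousOnInterval_of_eq_add_integral hT.le hη'int hη
  have hderiv : ∀ᵐ t, t ∈ Ioo 0 T → deriv η t + b * y t ≤ (c * y t + φ t) * η t + ψ t := by
    filter_upwards [(ae_restrict_iff' measurableSet_Icc).1 hineq, hη_deriv] with t ht ht' hmem
    rw [ht' hmem]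
    exact ht (Ioo_subset_Icc_self hmem)
  rw [← hη0] at hD
  refine ⟨?_, gronwall_smallness_integral_lt hT.le hb hc hη_ac (hη_nonneg T ⟨hT.le, le_rfl⟩)
    hφint hψint hyint hφ0 hψ0 hy0 hderiv hD⟩
  rw [isCompact_Icc.sSup_lt_iff_of_continuous (nonempty_Icc.2 hT.le)
    (uIcc_of_le hT.le ▸ hη_ac.continuousOn)]
  exact gronwall_smallness_forall_lt hT.le hb hc hη_ac hφint hψint hφ0 hψ0 hy0 hderiv hD

/-- Smallness Gronwall-type lemma with an extra zero-order coefficient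
(Lemma "RRS2016-L10.3phi"): if the non-negative absolutely continuous
function `η` (encoded by the FTC representation with an integrable a.e.
derivative `η'`) satisfies `η' + b y ≤ (c y + φ) η + ψ` a.e. on `[0,T]`,
with `φ, ψ, y ≥ 0` integrable, `b, c > 0`, `η 0 = η₀ ≥ 0`, and, with
`Φ(s) := ∫₀ˢ φ`, `D := η₀ + ∫₀ᵀ e^{−Φ(τ)} ψ(τ) dτ < (b/c) e^{−1−Φ(T)}`,
then `sup_{[0,T]} η < b/c` and `∫₀ᵀ y < 1/c`. -/
theorem gronwall_smallness_phi
    (T : ℝ) (hT : 0 < T)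
    (η η' φ ψ y : ℝ → ℝ) (b c η₀ : ℝ)
    (hb : 0 < b) (hc : 0 < c) (hη₀ : 0 ≤ η₀)
    (hη_nonneg : ∀ t ∈ Set.Icc (0 : ℝ) T, 0 ≤ η t)
    (hη : ∀ t ∈ Set.Icc (0 : ℝ) T, η t = η 0 + ∫ s in (0 : ℝ)..t, η' s)
    (hη0 : η 0 = η₀)
    (hη'int : IntervalIntegrable η' volume 0 T)
    (hφint : IntervalIntegrable φ volume 0 T)
    (hψint : IntervalIntegrable ψ volume 0 T)
    (hyint : IntervalIntegrable y volume 0 T)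
    (hφ0 : ∀ t ∈ Set.Icc (0 : ℝ) T, 0 ≤ φ t)
    (hψ0 : ∀ t ∈ Set.Icc (0 : ℝ) T, 0 ≤ ψ t)
    (hy0 : ∀ t ∈ Set.Icc (0 : ℝ) T, 0 ≤ y t)
    (hineq : ∀ᵐ t ∂(volume.restrict (Set.Icc (0 : ℝ) T)),
      η' t + b * y t ≤ (c * y t + φ t) * η t + ψ t)
    (hD : η₀ + (∫ τ in (0 : ℝ)..T, Real.exp (-(∫ σ in (0 : ℝ)..τ, φ σ)) * ψ τ)
        < b / c * Real.exp (-(1 + ∫ σ in (0 : ℝ)..T, φ σ))) :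
    sSup (η '' Set.Icc (0 : ℝ) T) < b / c ∧
    (∫ τ in (0 : ℝ)..T, y τ) < 1 / c :=
  gronwall_smallness_phi_general T hT η η' φ ψ y b c η₀ hb hc hη_nonneg hη hη0 hη'int hφint hψint
    hyint hφ0 hψ0 hy0 hineq hD
end

section
/- Let n≥1, s,θ∈ℝ, and σ̃ > max{|s|, |s−θ+1|} + n/2. Then there exists a constant C = C(s,θ,σ̃,n) > 0 with the following property: for all sequences ĝ:ℤⁿ→ℂ and ŵ:ℤⁿ→ℂ such that (∑_{ξ∈ℤⁿ∖{0}} ϱ(ξ)^{2(σ̃+1)}|ĝ(ξ)|²)^{1/2} and (∑_{ξ∈ℤⁿ} ϱ(ξ)^{2s}|ŵ(ξ)|²)^{1/2} are finite, the commutator sequence K(ξ) := ∑_{η∈ℤⁿ} (ϱ(ξ)^θ − ϱ(ξ−η)^θ) ĝ(η) ŵ(ξ−η) (which are the Fourier coefficients of Λ_#^θ(gw) − g·Λ_#^θ w) satisfies ( ∑_{ξ∈ℤⁿ} ϱ(ξ)^{2(s−θ+1)}|K(ξ)|² )^{1/2} ≤ C · ( ∑_{ξ∈ℤⁿ∖{0}}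 ϱ(ξ)^{2(σ̃+1)}|ĝ(ξ)|² )^{1/2} · ( ∑_{ξ∈ℤⁿ} ϱ(ξ)^{2s}|ŵ(ξ)|² )^{1/2}. -/
open scoped BigOperators

/-- The weight `ϱ(ξ) = 2π(1+|ξ|²)^{1/2}` defining the periodic Sobolev norms. -/
noncomputable def varrho {n : ℕ} (ξ : Fin n → ℤ) : ℝ :=
  2 * Real.pi * Real.sqrt (1 + ∑ i, ((ξ i : ℝ)) ^ 2)

/-!
By the mean value theorem, the bound `|ϱ(ξ) - ϱ(ξ - η)| ≤ ϱ(η)` and Peetre's inequality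
`ϱ(ξ)^t ≤ ϱ(η)^|t| ϱ(ξ - η)^t`, every term of the commutator satisfies
`ϱ(ξ)^(s-θ+1) |ϱ(ξ)^θ - ϱ(ξ-η)^θ| ≤ 2|θ| ϱ(η)^(1+M) ϱ(ξ-η)^s` with `M = max{|s|, |s-θ+1|}`.
Hence `ϱ^(s-θ+1) |K|` is dominated by the convolution of `a = ϱ^(1+M) |ĝ|` with `b = ϱ^s |ŵ|`,
and Young's inequality `‖a * b‖₂ ≤ ‖a‖₁ ‖b‖₂` reduces the estimate to an `ℓ¹` bound on `a`.
That bound is Cauchy–Schwarz against the weight `ϱ^(-2(σ̃-M))`, which is summable over `ℤⁿ`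
because `2(σ̃ - M) > n`.
-/

namespace BesselCommutator

theorem rpow_two_mul {x : ℝ} (hx : 0 ≤ x) (t : ℝ) : x ^ (2 * t) = (x ^ t) ^ 2 := by
  rw [mul_comm]; exact_mod_cast Real.rpow_mul_natCast hx t 2

theorem rpow_le_rpow_add_rpow_of_mem_uIcc (e : ℝ) {a b x : ℝ} (ha : 0 < a) (hb : 0 < b)
    (hx : x ∈ Set.uIcc a b) : x ^ e ≤ a ^ e + b ^ e := by
  wlog hab : a ≤ b generalizing a b
  · rw [add_comm]; exact this hb ha (Set.uIcc_comm a b ▸ hx) (le_of_not_ge hab)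
  rw [Set.uIcc_of_le hab] at hx
  have ha' := Real.rpow_nonneg ha.le e
  have hb' := Real.rpow_nonneg hb.le e
  rcases le_total 0 e with he | he
  · linarith [Real.rpow_le_rpow (ha.le.trans hx.1) hx.2 he]
  · linarith [Real.rpow_le_rpow_of_nonpos ha hx.1 he]

theorem abs_rpow_sub_rpow_le (θ : ℝ) {a b : ℝ} (ha : 0 < a) (hb : 0 < b) :
    |a ^ θ - b ^ θ| ≤ |θ| * (a ^ (θ - 1) + b ^ (θ - 1)) * |a - b| := by
  have hpos : ∀ x ∈ Set.uIcc b a, 0 < x := fun x hx => (lt_min hb ha).trans_le hx.1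
  have hderiv : ∀ x ∈ Set.uIcc b a,
      HasDerivWithinAt (fun x : ℝ => x ^ θ) (θ * x ^ (θ - 1)) (Set.uIcc b a) x := fun x hx =>
    (Real.hasDerivAt_rpow_const (Or.inl (hpos x hx).ne')).hasDerivWithinAt
  have hbound : ∀ x ∈ Set.uIcc b a, ‖θ * x ^ (θ - 1)‖ ≤ |θ| * (a ^ (θ - 1) + b ^ (θ - 1)) := by
    intro x hx
    rw [Real.norm_eq_abs, abs_mul, abs_of_nonneg (Real.rpow_nonneg (hpos x hx).le _)]
    exact mul_le_mul_of_nonneg_left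
      (rpow_le_rpow_add_rpow_of_mem_uIcc _ ha hb (Set.uIcc_comm b a ▸ hx)) (abs_nonneg θ)
  simpa only [Real.norm_eq_abs] using Convex.norm_image_sub_le_of_norm_hasDerivWithin_le hderiv
    hbound (convex_uIcc b a) Set.left_mem_uIcc Set.right_mem_uIcc

theorem summable_and_tsum_sq_le_tsum_mul_tsum {ι : Type*} {r f g : ι → ℝ} (hr : ∀ i, 0 ≤ r i)
    (hf0 : ∀ i, 0 ≤ f i) (hg0 : ∀ i, 0 ≤ g i) (hf : Summable f) (hg : Summable g)
    (hrfg : ∀ i, r i ^ 2 ≤ f i * g i) :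
    Summable r ∧ (∑' i, r i) ^ 2 ≤ (∑' i, f i) * ∑' i, g i := by
  have hsum : Summable r := by
    refine .of_nonneg_of_le hr (fun i => ?_) ((hf.add hg).div_const 2)
    nlinarith [hrfg i, hr i, hf0 i, hg0 i, sq_nonneg (f i - g i)]
  have hfg : 0 ≤ (∑' i, f i) * ∑' i, g i := mul_nonneg (tsum_nonneg hf0) (tsum_nonneg hg0)
  refine ⟨hsum, (Real.le_sqrt (tsum_nonneg hr) hfg).mp (hsum.tsum_le_of_sum_le fun s => ?_)⟩
  refine (le_abs_self _).trans (Real.abs_le_sqrt ?_)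
  calc (∑ i ∈ s, r i) ^ 2 ≤ (∑ i ∈ s, f i) * ∑ i ∈ s, g i :=
        Finset.sum_sq_le_sum_mul_sum_of_sq_le_mul s (fun i _ => hf0 i) (fun i _ => hg0 i)
          (fun i _ => hrfg i)
    _ ≤ (∑' i, f i) * ∑' i, g i :=
        mul_le_mul (hf.sum_le_tsum s fun i _ => hf0 i) (hg.sum_le_tsum s fun i _ => hg0 i)
          (Finset.sum_nonneg fun i _ => hg0 i) (tsum_nonneg hf0)

theorem summable_and_tsum_rpow_mul_norm_le {ι E : Type*} [SeminormedAddGroup E] {ρ : ι → ℝ}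
    (hρ : ∀ i, 0 < ρ i) {M σ : ℝ} {u : ι → E} (hW : Summable fun i => ρ i ^ (-(2 * (σ - M))))
    (hu : Summable fun i => ρ i ^ (2 * (σ + 1)) * ‖u i‖ ^ 2) :
    Summable (fun i => ρ i ^ (1 + M) * ‖u i‖) ∧
      ∑' i, ρ i ^ (1 + M) * ‖u i‖ ≤
        √(∑' i, ρ i ^ (-(2 * (σ - M)))) * √(∑' i, ρ i ^ (2 * (σ + 1)) * ‖u i‖ ^ 2) := by
  have hsq : ∀ i, (ρ i ^ (1 + M) * ‖u i‖) ^ 2 =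
      ρ i ^ (-(2 * (σ - M))) * (ρ i ^ (2 * (σ + 1)) * ‖u i‖ ^ 2) := fun i => by
    rw [mul_pow, ← rpow_two_mul (hρ i).le, ← mul_assoc, ← Real.rpow_add (hρ i)]
    ring_nf
  obtain ⟨hsum, hle⟩ := summable_and_tsum_sq_le_tsum_mul_tsum
    (fun i => mul_nonneg (Real.rpow_pos_of_pos (hρ i) _).le (norm_nonneg _))
    (fun i => (Real.rpow_pos_of_pos (hρ i) _).le)
    (fun i => mul_nonneg (Real.rpow_pos_of_pos (hρ i) _).le (sq_nonneg _)) hW hu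
    (fun i => (hsq i).le)
  refine ⟨hsum, ?_⟩
  rw [← Real.sqrt_mul (tsum_nonneg fun i => (Real.rpow_pos_of_pos (hρ i) _).le)]
  exact (le_abs_self _).trans (Real.abs_le_sqrt hle)

theorem summable_and_hasSum_tsum_mul_sub {G : Type*} [AddGroup G] {a b : G → ℝ}
    (ha0 : ∀ η, 0 ≤ a η) (hb0 : ∀ ζ, 0 ≤ b ζ) (ha : Summable a) (hb : Summable b) :
    Summable (fun p : G × G => a p.2 * b (p.1 - p.2)) ∧
      HasSum (fun ξ => ∑' η, a η * b (ξ - η)) ((∑' η, a η) * ∑' ζ, b ζ) := by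
  let e : G × G ≃ G × G :=
    (Equiv.prodShear (Equiv.refl G) Equiv.addRight).trans (Equiv.prodComm G G)
  have hprod : HasSum (fun p : G × G => a p.1 * b p.2) ((∑' η, a η) * ∑' ζ, b ζ) :=
    ha.hasSum.mul hb.hasSum (ha.mul_of_nonneg hb ha0 hb0)
  have hF : HasSum (fun p : G × G => a p.2 * b (p.1 - p.2)) ((∑' η, a η) * ∑' ζ, b ζ) := by
    refine e.hasSum_iff.mp (hprod.congr_fun fun p => ?_)
    simp [e]
  exact ⟨hF.summable, hF.prod_fiberwise fun ξ => (hF.summable.prod_factor ξ).hasSum⟩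

/-- Young's inequality `‖a ⋆ b‖₂ ≤ ‖a‖₁ ‖b‖₂`, by Cauchy–Schwarz with weights `a η`. -/
theorem summable_and_tsum_sq_tsum_mul_sub_le {G : Type*} [AddGroup G] {a b : G → ℝ}
    (ha0 : ∀ η, 0 ≤ a η) (hb0 : ∀ ζ, 0 ≤ b ζ) (ha : Summable a) (hb : Summable fun ζ => b ζ ^ 2) :
    (∀ ξ, Summable fun η => a η * b (ξ - η)) ∧
      Summable (fun ξ => (∑' η, a η * b (ξ - η)) ^ 2) ∧
      ∑' ξ, (∑' η, a η * b (ξ - η)) ^ 2 ≤ (∑' η, a η) ^ 2 * ∑' ζ, b ζ ^ 2 := by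
  obtain ⟨hF, hT⟩ := summable_and_hasSum_tsum_mul_sub ha0 (fun ζ => sq_nonneg (b ζ)) ha hb
  have hCS : ∀ ξ, Summable (fun η => a η * b (ξ - η)) ∧
      (∑' η, a η * b (ξ - η)) ^ 2 ≤ (∑' η, a η) * ∑' η, a η * b (ξ - η) ^ 2 := fun ξ =>
    summable_and_tsum_sq_le_tsum_mul_tsum (fun η => mul_nonneg (ha0 η) (hb0 _)) ha0
      (fun η => mul_nonneg (ha0 η) (sq_nonneg _)) ha (hF.prod_factor ξ)
      (fun η => (by ring : (a η * b (ξ - η)) ^ 2 = a η * (a η * b (ξ - η) ^ 2)).le)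
  have hsq : Summable fun ξ => (∑' η, a η * b (ξ - η)) ^ 2 :=
    .of_nonneg_of_le (fun ξ => sq_nonneg _) (fun ξ => (hCS ξ).2) (hT.summable.mul_left _)
  refine ⟨fun ξ => (hCS ξ).1, hsq, ?_⟩
  calc ∑' ξ, (∑' η, a η * b (ξ - η)) ^ 2
      ≤ ∑' ξ, (∑' η, a η) * ∑' η, a η * b (ξ - η) ^ 2 :=
        hsq.tsum_le_tsum (fun ξ => (hCS ξ).2) (hT.summable.mul_left _)
    _ = (∑' η, a η) ^ 2 * ∑' ζ, b ζ ^ 2 := by rw [tsum_mul_left, hT.tsum_eq]; ring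

theorem summable_and_sqrt_tsum_sq_le_tsum_mul_sqrt_tsum_sq {G E : Type*} [AddGroup G]
    [NormedAddCommGroup E] [CompleteSpace E] {k : G → G → E} {m a b : G → ℝ} (hm : ∀ ξ, 0 < m ξ)
    (ha0 : ∀ η, 0 ≤ a η) (hb0 : ∀ ζ, 0 ≤ b ζ) (ha : Summable a) (hb : Summable fun ζ => b ζ ^ 2)
    (hk : ∀ ξ η, m ξ * ‖k ξ η‖ ≤ a η * b (ξ - η)) :
    (∀ ξ, Summable (k ξ)) ∧
      √(∑' ξ, (m ξ * ‖∑' η, k ξ η‖) ^ 2) ≤ (∑' η, a η) * √(∑' ζ, b ζ ^ 2) := by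
  obtain ⟨hconv, hsq, hle⟩ := summable_and_tsum_sq_tsum_mul_sub_le ha0 hb0 ha hb
  have hnorm : ∀ ξ η, ‖k ξ η‖ ≤ a η * b (ξ - η) / m ξ := fun ξ η =>
    (le_div_iff₀' (hm ξ)).mpr (hk ξ η)
  have hnorm_sum : ∀ ξ, Summable fun η => ‖k ξ η‖ := fun ξ =>
    .of_nonneg_of_le (fun η => norm_nonneg _) (hnorm ξ) ((hconv ξ).div_const _)
  have hpt : ∀ ξ, m ξ * ‖∑' η, k ξ η‖ ≤ ∑' η, a η * b (ξ - η) := fun ξ =>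
    calc m ξ * ‖∑' η, k ξ η‖ ≤ m ξ * ∑' η, ‖k ξ η‖ :=
          mul_le_mul_of_nonneg_left (norm_tsum_le_tsum_norm (hnorm_sum ξ)) (hm ξ).le
      _ = ∑' η, m ξ * ‖k ξ η‖ := tsum_mul_left.symm
      _ ≤ ∑' η, a η * b (ξ - η) := ((hnorm_sum ξ).mul_left _).tsum_le_tsum (hk ξ) (hconv ξ)
  have hpt_sq : ∀ ξ, (m ξ * ‖∑' η, k ξ η‖) ^ 2 ≤ (∑' η, a η * b (ξ - η)) ^ 2 := fun ξ =>
    pow_le_pow_left₀ (mul_nonneg (hm ξ).le (norm_nonneg _)) (hpt ξ) 2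
  refine ⟨fun ξ => (hnorm_sum ξ).of_norm, ?_⟩
  rw [← Real.sqrt_sq (tsum_nonneg ha0), ← Real.sqrt_mul (sq_nonneg _)]
  exact Real.sqrt_le_sqrt
    (((hsq.of_nonneg_of_le (fun ξ => sq_nonneg _) hpt_sq).tsum_le_tsum hpt_sq hsq).trans hle)

theorem summable_one_add_sq_rpow_neg {q : ℝ} (hq : 1 < 2 * q) :
    Summable fun k : ℤ => (1 + (k : ℝ) ^ 2) ^ (-q) := by
  refine (Real.summable_abs_int_rpow hq).of_norm_bounded_eventually ?_
  filter_upwards [Filter.eventually_cofinite_ne 0] with k hk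
  have hk : 0 < |(k : ℝ)| := abs_pos.mpr (Int.cast_ne_zero.mpr hk)
  rw [Real.norm_of_nonneg (by positivity)]
  calc (1 + (k : ℝ) ^ 2) ^ (-q) ≤ (|(k : ℝ)| ^ (2 : ℝ)) ^ (-q) :=
        Real.rpow_le_rpow_of_nonpos (by positivity) (by rw [Real.rpow_two, sq_abs]; linarith)
          (by linarith)
    _ = |(k : ℝ)| ^ (-(2 * q)) := by rw [← Real.rpow_mul hk.le]; ring_nf

theorem summable_pi_prod {ι α : Type*} [Fintype ι] {f : α → ℝ} (hf0 : ∀ a, 0 ≤ f a)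
    (hf : Summable f) : Summable fun x : ι → α => ∏ i, f (x i) := by
  classical
  refine summable_of_sum_le (c := (∑' a, f a) ^ Fintype.card ι)
    (fun x => Finset.prod_nonneg fun i _ => hf0 _) fun s => ?_
  calc ∑ x ∈ s, ∏ i, f (x i) ≤ ∑ x ∈ Fintype.piFinset fun i => s.image (· i), ∏ i, f (x i) :=
        Finset.sum_le_sum_of_subset_of_nonneg
          (fun x hx => Fintype.mem_piFinset.mpr fun i => Finset.mem_image_of_mem _ hx)
          (fun x _ _ => Finset.prod_nonneg fun i _ => hf0 _)
    _ = ∏ i, ∑ a ∈ s.image (· i), f a := (Finset.prod_univ_sum _ fun _ => f).symm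
    _ ≤ ∏ _i : ι, ∑' a, f a :=
        Finset.prod_le_prod (fun i _ => Finset.sum_nonneg fun a _ => hf0 a)
          fun i _ => hf.sum_le_tsum _ fun a _ => hf0 a
    _ = (∑' a, f a) ^ Fintype.card ι := Finset.prod_const _

/-- `√(1 + t²)` is the Euclidean norm of `(1, t)`, so this is the reverse triangle inequality. -/
theorem abs_sqrt_one_add_norm_sq_sub_le {E : Type*} [SeminormedAddCommGroup E] (x y : E) :
    |√(1 + ‖x‖ ^ 2) - √(1 + ‖y‖ ^ 2)| ≤ ‖x - y‖ := by
  have hnorm : ∀ t : ℝ, ‖!₂[1, t]‖ = √(1 + t ^ 2) := fun t => by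
    simp [EuclideanSpace.norm_eq, Fin.sum_univ_two]
  have h := abs_norm_sub_norm_le (!₂[1, ‖x‖]) (!₂[1, ‖y‖])
  rw [hnorm, hnorm, ← WithLp.toLp_sub, show ![(1 : ℝ), ‖x‖] - ![1, ‖y‖] = ![0, ‖x‖ - ‖y‖] by simp,
    EuclideanSpace.norm_eq, Fin.sum_univ_two] at h
  simp only [Matrix.cons_val_zero, Matrix.cons_val_one, norm_zero, Real.norm_eq_abs, sq_abs] at h
  rw [zero_pow two_ne_zero, zero_add, Real.sqrt_sq_eq_abs] at h
  exact h.trans (abs_norm_sub_norm_le x y)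

theorem rpow_add_le_rpow_abs_mul_rpow {G : Type*} [AddGroup G] {ρ : G → ℝ}
    (hpos : ∀ x, 0 < ρ x) (hneg : ∀ x, ρ (-x) = ρ x) (hmul : ∀ x y, ρ (x + y) ≤ ρ x * ρ y)
    (t : ℝ) (x y : G) :
    ρ (x + y) ^ t ≤ ρ x ^ |t| * ρ y ^ t := by
  rcases le_total 0 t with ht | ht
  · rw [abs_of_nonneg ht, ← Real.mul_rpow (hpos x).le (hpos y).le]
    exact Real.rpow_le_rpow (hpos _).le (hmul x y) ht
  · have hy : ρ y ≤ ρ x * ρ (x + y) := by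
      simpa [hneg] using hmul (-x) (x + y)
    have h := Real.rpow_le_rpow_of_nonpos (hpos y) hy ht
    rw [Real.mul_rpow (hpos x).le (hpos _).le] at h
    rw [abs_of_nonpos ht, Real.rpow_neg (hpos x).le, ← div_eq_inv_mul,
      le_div_iff₀' (Real.rpow_pos_of_pos (hpos x) t)]
    exact h

variable {n : ℕ}

def toEuclidean : (Fin n → ℤ) →+ EuclideanSpace ℝ (Fin n) :=
  AddMonoidHom.mk' (fun ξ => WithLp.toLp 2 fun i => (ξ i : ℝ)) fun ξ ζ => by ext; simp

theorem varrho_eq_sqrt_one_add_norm_sq (ξ : Fin n → ℤ) :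
    varrho ξ = 2 * Real.pi * √(1 + ‖toEuclidean ξ‖ ^ 2) := by
  simp [varrho, toEuclidean, EuclideanSpace.norm_sq_eq]

theorem one_le_varrho (ξ : Fin n → ℤ) : 1 ≤ varrho ξ := by
  rw [varrho_eq_sqrt_one_add_norm_sq]
  have h1 : 1 ≤ √(1 + ‖toEuclidean ξ‖ ^ 2) := Real.one_le_sqrt.mpr (by simp)
  nlinarith [Real.pi_gt_three]

theorem varrho_pos (ξ : Fin n → ℤ) : 0 < varrho ξ := one_pos.trans_le (one_le_varrho ξ)

theorem varrho_neg (ξ : Fin n → ℤ) : varrho (-ξ) = varrho ξ := by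
  simp [varrho_eq_sqrt_one_add_norm_sq]

theorem varrho_add_le (η ζ : Fin n → ℤ) : varrho (η + ζ) ≤ varrho η * varrho ζ := by
  simp only [varrho_eq_sqrt_one_add_norm_sq, map_add]
  set x := toEuclidean η
  set y := toEuclidean ζ
  have hxy : √(1 + ‖x + y‖ ^ 2) ≤ 2 * (√(1 + ‖x‖ ^ 2) * √(1 + ‖y‖ ^ 2)) :=
    calc √(1 + ‖x + y‖ ^ 2) ≤ 1 + ‖x + y‖ := sqrt_one_add_norm_sq_le _
      _ ≤ (1 + ‖x‖) * (1 + ‖y‖) := by nlinarith [norm_add_le x y, norm_nonneg x, norm_nonneg y]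
      _ ≤ (√2 * √(1 + ‖x‖ ^ 2)) * (√2 * √(1 + ‖y‖ ^ 2)) :=
        mul_le_mul (one_add_norm_le_sqrt_two_mul_sqrt x) (one_add_norm_le_sqrt_two_mul_sqrt y)
          (by positivity) (by positivity)
      _ = 2 * (√(1 + ‖x‖ ^ 2) * √(1 + ‖y‖ ^ 2)) := by
        rw [mul_mul_mul_comm, Real.mul_self_sqrt zero_le_two]
  have h2 : 2 ≤ 2 * Real.pi := by linarith [Real.pi_gt_three]
  calc 2 * Real.pi * √(1 + ‖x + y‖ ^ 2)
      ≤ 2 * Real.pi * (2 * (√(1 + ‖x‖ ^ 2) * √(1 + ‖y‖ ^ 2))) := by gcongr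
    _ ≤ 2 * Real.pi * (2 * Real.pi * (√(1 + ‖x‖ ^ 2) * √(1 + ‖y‖ ^ 2))) := by gcongr
    _ = _ := by ring

theorem abs_varrho_sub_varrho_le (ξ ζ : Fin n → ℤ) : |varrho ξ - varrho ζ| ≤ varrho (ξ - ζ) := by
  simp only [varrho_eq_sqrt_one_add_norm_sq, map_sub]
  rw [← mul_sub, abs_mul, abs_of_pos (by positivity : (0 : ℝ) < 2 * Real.pi)]
  gcongr
  exact (abs_sqrt_one_add_norm_sq_sub_le _ _).trans
    ((Real.le_sqrt (norm_nonneg _) (by positivity)).mpr (by linarith))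

theorem varrho_rpow_two_mul_mul_sq (t c : ℝ) (ξ : Fin n → ℤ) :
    varrho ξ ^ (2 * t) * c ^ 2 = (varrho ξ ^ t * c) ^ 2 := by
  rw [mul_pow, rpow_two_mul (varrho_pos ξ).le]

theorem varrho_rpow_add_le (t : ℝ) (η ζ : Fin n → ℤ) :
    varrho (η + ζ) ^ t ≤ varrho η ^ |t| * varrho ζ ^ t :=
  rpow_add_le_rpow_abs_mul_rpow varrho_pos varrho_neg varrho_add_le t η ζ

theorem one_add_sq_le_varrho_sq (η : Fin n → ℤ) (i : Fin n) : 1 + (η i : ℝ) ^ 2 ≤ varrho η ^ 2 := by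
  have hQ : (η i : ℝ) ^ 2 ≤ ∑ j, (η j : ℝ) ^ 2 :=
    Finset.single_le_sum (fun j _ => sq_nonneg (η j : ℝ)) (Finset.mem_univ i)
  have hπ : 1 ≤ (2 * Real.pi) ^ 2 := by nlinarith [Real.pi_gt_three]
  rw [varrho, mul_pow, Real.sq_sqrt (by positivity)]
  exact (add_le_add_right hQ 1).trans (le_mul_of_one_le_left (by positivity) hπ)

theorem varrho_rpow_mul_abs_rpow_sub_le (s θ : ℝ) (η ζ : Fin n → ℤ) :
    varrho (η + ζ) ^ (s - θ + 1) * |varrho (η + ζ) ^ θ - varrho ζ ^ θ| ≤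
      2 * |θ| * varrho η ^ (1 + max |s| |s - θ + 1|) * varrho ζ ^ s := by
  set ξ := η + ζ
  set M := max |s| |s - θ + 1|
  have hξ := varrho_pos ξ
  have hζ := varrho_pos ζ
  have hmvt : |varrho ξ ^ θ - varrho ζ ^ θ| ≤
      |θ| * (varrho ξ ^ (θ - 1) + varrho ζ ^ (θ - 1)) * varrho η := by
    refine (abs_rpow_sub_rpow_le θ hξ hζ).trans (mul_le_mul_of_nonneg_left ?_ (by positivity))
    simpa [ξ] using abs_varrho_sub_varrho_le ξ ζ
  have hpeetre : ∀ t, |t| ≤ M → varrho ξ ^ t ≤ varrho η ^ M * varrho ζ ^ t := fun t ht =>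
    (varrho_rpow_add_le t η ζ).trans (mul_le_mul_of_nonneg_right
      (Real.rpow_le_rpow_of_exponent_le (one_le_varrho η) ht) (by positivity))
  have hexp : ∀ x : ℝ, 0 < x → x ^ (s - θ + 1) * x ^ (θ - 1) = x ^ s := fun x hx => by
    rw [← Real.rpow_add hx]; ring_nf
  calc varrho ξ ^ (s - θ + 1) * |varrho ξ ^ θ - varrho ζ ^ θ|
      ≤ varrho ξ ^ (s - θ + 1) * (|θ| * (varrho ξ ^ (θ - 1) + varrho ζ ^ (θ - 1)) * varrho η) := by
        gcongr
    _ = |θ| * varrho η * (varrho ξ ^ (s - θ + 1) * varrho ξ ^ (θ - 1) +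
          varrho ξ ^ (s - θ + 1) * varrho ζ ^ (θ - 1)) := by ring
    _ ≤ |θ| * varrho η * (varrho η ^ M * varrho ζ ^ s +
          varrho η ^ M * varrho ζ ^ (s - θ + 1) * varrho ζ ^ (θ - 1)) := by
        rw [hexp _ hξ]
        refine mul_le_mul_of_nonneg_left (add_le_add (hpeetre s (le_max_left _ _)) ?_)
          (mul_nonneg (abs_nonneg θ) (varrho_pos η).le)
        exact mul_le_mul_of_nonneg_right (hpeetre _ (le_max_right _ _)) (by positivity)
    _ = 2 * |θ| * (varrho η * varrho η ^ M) * varrho ζ ^ s := by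
        rw [mul_assoc (varrho η ^ M), hexp _ hζ]; ring
    _ = 2 * |θ| * varrho η ^ (1 + M) * varrho ζ ^ s := by
        rw [Real.rpow_add (varrho_pos η), Real.rpow_one]

theorem summable_varrho_rpow_neg {p : ℝ} (hp : (n : ℝ) < p) :
    Summable fun η : Fin n → ℤ => varrho η ^ (-p) := by
  rcases Nat.eq_zero_or_pos n with rfl | hn
  · exact .of_finite
  have hn' : (0 : ℝ) < n := Nat.cast_pos.mpr hn
  obtain ⟨q, rfl⟩ : ∃ q, p = 2 * q * n := ⟨p / (2 * n), by field_simp⟩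
  have hq : 1 < 2 * q := by nlinarith
  refine (summable_pi_prod (fun k => by positivity)
    (summable_one_add_sq_rpow_neg hq)).of_nonneg_of_le
      (fun η => (Real.rpow_pos_of_pos (varrho_pos η) _).le) fun η => ?_
  have hη := varrho_pos η
  calc varrho η ^ (-(2 * q * n)) = ∏ _i : Fin n, (varrho η ^ (2 : ℝ)) ^ (-q) := by
        rw [Finset.prod_const, Finset.card_univ, Fintype.card_fin, ← Real.rpow_mul hη.le,
          ← Real.rpow_mul_natCast hη.le]
        ring_nf
    _ ≤ ∏ i, (1 + (η i : ℝ) ^ 2) ^ (-q) :=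
        Finset.prod_le_prod (fun i _ => Real.rpow_nonneg (Real.rpow_nonneg hη.le _) _) fun i _ =>
          Real.rpow_le_rpow_of_nonpos (by positivity)
            (by rw [Real.rpow_two]; exact one_add_sq_le_varrho_sq η i) (by linarith)

theorem summable_and_tsum_indicator_varrho_rpow_mul_norm_le {E : Type*} [SeminormedAddGroup E]
    {M σ : ℝ} (hMσ : M + n / 2 < σ) {g : (Fin n → ℤ) → E}
    (hg : Summable fun ξ : {ξ : Fin n → ℤ // ξ ≠ 0} => varrho ξ.1 ^ (2 * (σ + 1)) * ‖g ξ.1‖ ^ 2) :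
    Summable ({η | η ≠ 0}.indicator fun η => varrho η ^ (1 + M) * ‖g η‖) ∧
      ∑' η, {η | η ≠ 0}.indicator (fun η => varrho η ^ (1 + M) * ‖g η‖) η ≤
        √(∑' η : {ξ : Fin n → ℤ // ξ ≠ 0}, varrho η.1 ^ (-(2 * (σ - M)))) *
          √(∑' ξ : {ξ : Fin n → ℤ // ξ ≠ 0}, varrho ξ.1 ^ (2 * (σ + 1)) * ‖g ξ.1‖ ^ 2) := by
  have hW : Summable fun η : {ξ : Fin n → ℤ // ξ ≠ 0} => varrho η.1 ^ (-(2 * (σ - M))) :=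
    (summable_varrho_rpow_neg (by linarith)).subtype _
  obtain ⟨hsum, hle⟩ := summable_and_tsum_rpow_mul_norm_le
    (fun η : {ξ : Fin n → ℤ // ξ ≠ 0} => varrho_pos η.1) hW hg
  exact ⟨summable_subtype_iff_indicator.mp hsum, (tsum_subtype _ _).symm.trans_le hle⟩

/-- The `η = 0` term of the commutator vanishes, so `ĝ(0)` does not enter the estimate. -/
theorem varrho_rpow_mul_norm_commutator_le (s θ : ℝ) (g w : (Fin n → ℤ) → ℂ) (ξ η : Fin n → ℤ) :
    varrho ξ ^ (s - θ + 1) * ‖(varrho ξ ^ θ - varrho (ξ - η) ^ θ) • (g η * w (ξ - η))‖ ≤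
      2 * |θ| * {η | η ≠ 0}.indicator
          (fun η => varrho η ^ (1 + max |s| |s - θ + 1|) * ‖g η‖) η *
        (varrho (ξ - η) ^ s * ‖w (ξ - η)‖) := by
  by_cases hη : η = 0
  · simp [hη]
  have h := varrho_rpow_mul_abs_rpow_sub_le s θ η (ξ - η)
  rw [add_sub_cancel] at h
  rw [Set.indicator_of_mem hη, norm_smul, norm_mul, Real.norm_eq_abs]
  calc varrho ξ ^ (s - θ + 1) * (|varrho ξ ^ θ - varrho (ξ - η) ^ θ| * (‖g η‖ * ‖w (ξ - η)‖))
      = varrho ξ ^ (s - θ + 1) * |varrho ξ ^ θ - varrho (ξ - η) ^ θ| *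
          (‖g η‖ * ‖w (ξ - η)‖) := by ring
    _ ≤ 2 * |θ| * varrho η ^ (1 + max |s| |s - θ + 1|) * varrho (ξ - η) ^ s *
          (‖g η‖ * ‖w (ξ - η)‖) := by gcongr
    _ = _ := by ring

end BesselCommutator

open BesselCommutator

theorem bessel_commutator_estimate_general
    (n : ℕ) (s θ σ' : ℝ)
    (hσ : max |s| |s - θ + 1| + (n : ℝ) / 2 < σ') :
    ∃ C : ℝ, 0 < C ∧
      ∀ g w : (Fin n → ℤ) → ℂ,
        (Summable fun ξ : {ξ : Fin n → ℤ // ξ ≠ 0} =>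
          varrho ξ.1 ^ (2 * (σ' + 1)) * ‖g ξ.1‖ ^ 2) →
        (Summable fun ξ : Fin n → ℤ => varrho ξ ^ (2 * s) * ‖w ξ‖ ^ 2) →
        (∀ ξ : Fin n → ℤ, Summable fun η : Fin n → ℤ =>
          (varrho ξ ^ θ - varrho (ξ - η) ^ θ) • (g η * w (ξ - η))) ∧
        Real.sqrt (∑' ξ : Fin n → ℤ, varrho ξ ^ (2 * (s - θ + 1)) *
            ‖∑' η : Fin n → ℤ,
              (varrho ξ ^ θ - varrho (ξ - η) ^ θ) • (g η * w (ξ - η))‖ ^ 2) ≤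
          C * Real.sqrt (∑' ξ : {ξ : Fin n → ℤ // ξ ≠ 0},
              varrho ξ.1 ^ (2 * (σ' + 1)) * ‖g ξ.1‖ ^ 2) *
            Real.sqrt (∑' ξ : Fin n → ℤ, varrho ξ ^ (2 * s) * ‖w ξ‖ ^ 2) := by
  set M := max |s| |s - θ + 1|
  set W := ∑' η : {ξ : Fin n → ℤ // ξ ≠ 0}, varrho η.1 ^ (-(2 * (σ' - M)))
  refine ⟨2 * |θ| * √W + 1, by positivity, fun g w hg hw => ?_⟩
  set a := {η : Fin n → ℤ | η ≠ 0}.indicator fun η => varrho η ^ (1 + M) * ‖g η‖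
  obtain ⟨ha, ha_le⟩ := summable_and_tsum_indicator_varrho_rpow_mul_norm_le hσ hg
  have ha0 : ∀ η, 0 ≤ a η := Set.indicator_nonneg fun η _ =>
    mul_nonneg (Real.rpow_pos_of_pos (varrho_pos η) _).le (norm_nonneg _)
  obtain ⟨hsum, hle⟩ := summable_and_sqrt_tsum_sq_le_tsum_mul_sqrt_tsum_sq
    (k := fun ξ η => (varrho ξ ^ θ - varrho (ξ - η) ^ θ) • (g η * w (ξ - η)))
    (m := fun ξ => varrho ξ ^ (s - θ + 1)) (a := fun η => 2 * |θ| * a η)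
    (b := fun ζ => varrho ζ ^ s * ‖w ζ‖) (fun ξ => Real.rpow_pos_of_pos (varrho_pos ξ) _)
    (fun η => mul_nonneg (by positivity) (ha0 η))
    (fun ζ => mul_nonneg (Real.rpow_pos_of_pos (varrho_pos ζ) s).le (norm_nonneg _))
    (ha.mul_left _) (by simpa only [varrho_rpow_two_mul_mul_sq] using hw)
    (varrho_rpow_mul_norm_commutator_le s θ g w)
  refine ⟨hsum, ?_⟩
  simp only [varrho_rpow_two_mul_mul_sq] at ha_le ⊢
  rw [tsum_mul_left] at hle
  refine hle.trans ((mul_le_mul_of_nonneg_right (mul_le_mul_of_nonneg_left ha_le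
    (by positivity)) (Real.sqrt_nonneg _)).trans ?_)
  rw [← mul_assoc]
  gcongr
  linarith

/-- Commutator estimate for the periodic Bessel-potential operator
(Theorem "Jcomm"), stated on the Fourier side: for
`σ̃ > max{|s|, |s−θ+1|} + n/2` there is a constant `C > 0` such that for all
`g ∈ H^{σ̃+1}_#` and `w ∈ H^s_#`, the commutator Fourier coefficients
`K(ξ) = ∑_η (ϱ(ξ)^θ − ϱ(ξ−η)^θ) ĝ(η) ŵ(ξ−η)` (those of
`Λ_#^θ(gw) − g Λ_#^θ w`) are well defined and satisfy
`‖K‖_{H^{s−θ+1}_#} ≤ C |g|_{H^{σ̃+1}_#} ‖w‖_{H^s_#}`. -/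
theorem bessel_commutator_estimate
    (n : ℕ) (hn : 1 ≤ n) (s θ σ' : ℝ)
    (hσ : max |s| |s - θ + 1| + (n : ℝ) / 2 < σ') :
    ∃ C : ℝ, 0 < C ∧
      ∀ g w : (Fin n → ℤ) → ℂ,
        (Summable fun ξ : {ξ : Fin n → ℤ // ξ ≠ 0} =>
          varrho ξ.1 ^ (2 * (σ' + 1)) * ‖g ξ.1‖ ^ 2) →
        (Summable fun ξ : Fin n → ℤ => varrho ξ ^ (2 * s) * ‖w ξ‖ ^ 2) →
        (∀ ξ : Fin n → ℤ, Summable fun η : Fin n → ℤ =>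
          (varrho ξ ^ θ - varrho (ξ - η) ^ θ) • (g η * w (ξ - η))) ∧
        Real.sqrt (∑' ξ : Fin n → ℤ, varrho ξ ^ (2 * (s - θ + 1)) *
            ‖∑' η : Fin n → ℤ,
              (varrho ξ ^ θ - varrho (ξ - η) ^ θ) • (g η * w (ξ - η))‖ ^ 2) ≤
          C * Real.sqrt (∑' ξ : {ξ : Fin n → ℤ // ξ ≠ 0},
              varrho ξ.1 ^ (2 * (σ' + 1)) * ‖g ξ.1‖ ^ 2) *
            Real.sqrt (∑' ξ : Fin n → ℤ, varrho ξ ^ (2 * s) * ‖w ξ‖ ^ 2) :=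
  bessel_commutator_estimate_general n s θ σ' hσ
end

section
/- First Korn inequality in Fourier form: let n≥1 and let v̂:ℤⁿ→ℂⁿ be any sequence. Then ∑_{ξ∈ℤⁿ} ∑_{j,β=1}^{n} |2π ξ_j v̂_β(ξ)|² ≤ 2 ∑_{ξ∈ℤⁿ} ∑_{j,β=1}^{n} | π ( ξ_j v̂_β(ξ) + ξ_β v̂_j(ξ) ) |², i.e., the Fourier expression of ‖∇v‖²_{L²(𝕋ⁿ)} is at most twice the Fourier expression of ‖𝔼(v)‖²_{L²(𝕋ⁿ)}, where 𝔼(v) is the symmetrized gradient with entries E_{jβ}(v) = ½(∂_j v_β + ∂_β v_j). -/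
/-!
For each frequency, with `c = ξ` real and `w = v̂(ξ)`, expanding the square gives
`∑ |c_j w_β + c_β w_j|² = 2 ∑ |c_j w_β|² + 2 |∑ c_j w_j|²`, since the cross terms factor as
`(∑ c_j w_j) · conj (∑ c_β w_β)`. Dropping the last term is Korn's inequality frequency by
frequency. Cauchy–Schwarz bounds that term by `∑ |c_j w_β|²`, so the two series converge or
diverge together, and the junk value `0` of a divergent `tsum` cannot break the inequality.
-/

open Complex ComplexConjugate

theorem tsum_le_tsum_of_nonneg_of_summable_imp {ι : Type*} {f g : ι → ℝ} (hf : 0 ≤ f)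
    (hfg : f ≤ g) (hsummable : Summable f → Summable g) : ∑' i, f i ≤ ∑' i, g i := by
  by_cases hg : Summable g
  · exact (hg.of_nonneg_of_le hf hfg).tsum_le_tsum hfg hg
  · rw [tsum_eq_zero_of_not_summable hg, tsum_eq_zero_of_not_summable (mt hsummable hg)]

section SymmetrizedProduct

variable {ι : Type*} [Fintype ι] (c : ι → ℝ) (w : ι → ℂ)

theorem sum_sum_norm_sq_symm_eq :
    ∑ j, ∑ β, ‖(c j : ℂ) * w β + c β * w j‖ ^ 2 =
      2 * ∑ j, ∑ β, ‖(c j : ℂ) * w β‖ ^ 2 + 2 * ‖∑ j, (c j : ℂ) * w j‖ ^ 2 := by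
  have cross : ∑ j, ∑ β, (c j * w β * conj (c β * w j) : ℂ) =
      (∑ j, (c j : ℂ) * w j) * conj (∑ j, (c j : ℂ) * w j) := by
    simp only [map_sum, map_mul, conj_ofReal, Finset.sum_mul, Finset.mul_sum]
    exact Finset.sum_congr rfl fun j _ => Finset.sum_congr rfl fun β _ => by ring
  have swap : ∑ j, ∑ β, ‖(c β : ℂ) * w j‖ ^ 2 = ∑ j, ∑ β, ‖(c j : ℂ) * w β‖ ^ 2 :=
    Finset.sum_comm
  have cross_re : ∑ j, ∑ β, 2 * (c j * w β * conj (c β * w j) : ℂ).re =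
      2 * ‖∑ j, (c j : ℂ) * w j‖ ^ 2 := by
    simp only [← Finset.mul_sum, ← re_sum, cross, mul_conj, ofReal_re, Complex.sq_norm]
  simp only [Complex.sq_norm, normSq_add, Finset.sum_add_distrib] at swap cross_re ⊢
  rw [swap, cross_re]
  ring

theorem two_mul_sum_sum_norm_sq_le :
    2 * ∑ j, ∑ β, ‖(c j : ℂ) * w β‖ ^ 2 ≤ ∑ j, ∑ β, ‖(c j : ℂ) * w β + c β * w j‖ ^ 2 := by
  rw [sum_sum_norm_sq_symm_eq]
  have := sq_nonneg ‖∑ j, (c j : ℂ) * w j‖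
  linarith

theorem norm_sum_mul_sq_le : ‖∑ j, (c j : ℂ) * w j‖ ^ 2 ≤ ∑ j, ∑ β, ‖(c j : ℂ) * w β‖ ^ 2 := by
  calc ‖∑ j, (c j : ℂ) * w j‖ ^ 2 ≤ (∑ j, ‖c j‖ * ‖w j‖) ^ 2 := by
        gcongr
        simpa only [norm_mul, norm_real] using norm_sum_le Finset.univ fun j => (c j : ℂ) * w j
    _ ≤ (∑ j, ‖c j‖ ^ 2) * ∑ β, ‖w β‖ ^ 2 := Finset.sum_mul_sq_le_sq_mul_sq _ _ _
    _ = ∑ j, ∑ β, ‖(c j : ℂ) * w β‖ ^ 2 := by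
        simp only [Finset.sum_mul_sum, norm_mul, norm_real, mul_pow]

theorem sum_sum_norm_sq_symm_le :
    ∑ j, ∑ β, ‖(c j : ℂ) * w β + c β * w j‖ ^ 2 ≤ 4 * ∑ j, ∑ β, ‖(c j : ℂ) * w β‖ ^ 2 := by
  rw [sum_sum_norm_sq_symm_eq]
  linarith [norm_sum_mul_sq_le c w]

end SymmetrizedProduct

theorem korn_first_inequality_fourier_general
    (n : ℕ) (v : (Fin n → ℤ) → Fin n → ℂ) :
    ∑' ξ : Fin n → ℤ, ∑ j : Fin n, ∑ β : Fin n,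
        ‖2 * (Real.pi : ℂ) * (ξ j : ℂ) * v ξ β‖ ^ 2 ≤
      2 * ∑' ξ : Fin n → ℤ, ∑ j : Fin n, ∑ β : Fin n,
        ‖(Real.pi : ℂ) * ((ξ j : ℂ) * v ξ β + (ξ β : ℂ) * v ξ j)‖ ^ 2 := by
  set F : (Fin n → ℤ) → ℝ := fun ξ => ∑ j, ∑ β, ‖(ξ j : ℂ) * v ξ β‖ ^ 2
  set G : (Fin n → ℤ) → ℝ := fun ξ => ∑ j, ∑ β, ‖(ξ j : ℂ) * v ξ β + (ξ β : ℂ) * v ξ j‖ ^ 2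
  have norm_sq_real_mul (r : ℝ) (z : ℂ) : ‖(r : ℂ) * z‖ ^ 2 = r ^ 2 * ‖z‖ ^ 2 := by
    rw [norm_mul, norm_real, mul_pow, Real.norm_eq_abs, sq_abs]
  have lhs_eq (ξ : Fin n → ℤ) : ∑ j, ∑ β, ‖2 * (Real.pi : ℂ) * (ξ j : ℂ) * v ξ β‖ ^ 2 =
      (2 * Real.pi) ^ 2 * F ξ := by
    simp only [F, Finset.mul_sum, ← norm_sq_real_mul, mul_assoc, ofReal_mul, ofReal_ofNat]
  have rhs_eq (ξ : Fin n → ℤ) :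
      ∑ j, ∑ β, ‖(Real.pi : ℂ) * ((ξ j : ℂ) * v ξ β + (ξ β : ℂ) * v ξ j)‖ ^ 2 =
        Real.pi ^ 2 * G ξ := by
    simp only [G, Finset.mul_sum, norm_sq_real_mul]
  have real_cast (ξ : Fin n → ℤ) (j : Fin n) : (ξ j : ℂ) = ((ξ j : ℝ) : ℂ) :=
    (ofReal_intCast _).symm
  have korn (ξ : Fin n → ℤ) : 2 * F ξ ≤ G ξ := by
    simpa only [F, G, real_cast] using two_mul_sum_sum_norm_sq_le (fun j => (ξ j : ℝ)) (v ξ)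
  have G_le (ξ : Fin n → ℤ) : G ξ ≤ 2 * (2 * F ξ) := by
    have := sum_sum_norm_sq_symm_le (fun j => (ξ j : ℝ)) (v ξ)
    simp only [← real_cast] at this
    linarith
  have hF : ∑' ξ, 2 * F ξ ≤ ∑' ξ, G ξ :=
    tsum_le_tsum_of_nonneg_of_summable_imp (fun ξ => by positivity) korn
      fun h => (h.mul_left 2).of_nonneg_of_le (fun ξ => by positivity) G_le
  simp only [lhs_eq, rhs_eq, tsum_mul_left] at hF ⊢
  nlinarith [Real.pi_pos]

/-- First Korn inequality in Fourier form (inequality "eq:mik15" on the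
Fourier side): for any sequence of Fourier coefficients `v̂ : ℤⁿ → ℂⁿ`,
`∑_ξ ∑_{j,β} |2π ξ_j v̂_β(ξ)|² ≤ 2 ∑_ξ ∑_{j,β} |π(ξ_j v̂_β(ξ) + ξ_β v̂_j(ξ))|²`,
i.e. the Fourier expression of `‖∇v‖²_{L²(𝕋ⁿ)}` is at most twice that of
`‖𝔼(v)‖²_{L²(𝕋ⁿ)}`, where `𝔼(v)` is the symmetrized gradient. -/
theorem korn_first_inequality_fourier
    (n : ℕ) (hn : 1 ≤ n) (v : (Fin n → ℤ) → Fin n → ℂ) :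
    ∑' ξ : Fin n → ℤ, ∑ j : Fin n, ∑ β : Fin n,
        ‖2 * (Real.pi : ℂ) * (ξ j : ℂ) * v ξ β‖ ^ 2 ≤
      2 * ∑' ξ : Fin n → ℤ, ∑ j : Fin n, ∑ β : Fin n,
        ‖(Real.pi : ℂ) * ((ξ j : ℂ) * v ξ β + (ξ β : ℂ) * v ξ j)‖ ^ 2 :=
  korn_first_inequality_fourier_general n v
end

section
/- The divergence is an isomorphism from the gradient-type subspace of Ḣ^{s+1}_# onto Ḣ^s_#, in Fourier form: let n≥2 and s∈ℝ. The map taking a vector sequence ŵ : ℤⁿ∖{0} → ℂⁿ, with ŵ(ξ) a complex scalar multiple of ξ for every ξ and ∑_{ξ≠0} ϱ(ξ)^{2(s+1)}|ŵ(ξ)|² < ∞, to the scalar sequence ĥ(ξ) := 2πi ξ·ŵ(ξ) is a bijection onto the set of scalar sequences ĥ : ℤⁿ∖{0} → ℂ with ∑_{ξ≠0} ϱ(ξ)^{2s}|ĥ(ξ)|² < ∞; moreover ½ ∑_{ξ≠0} ϱ(ξ)^{2(s+1)}|ŵ(ξ)|² ≤ ∑_{ξ≠0} ϱ(ξ)^{2s}|ĥ(ξ)|²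 ≤ ∑_{ξ≠0} ϱ(ξ)^{2(s+1)}|ŵ(ξ)|². -/
open scoped BigOperators

/-- The divergence operator on the Fourier side: `ŵ(ξ) ↦ 2πi ξ·ŵ(ξ)`. -/
noncomputable def fourierDiv {n : ℕ}
    (w : {ξ : Fin n → ℤ // ξ ≠ 0} → Fin n → ℂ)
    (ξ : {ξ : Fin n → ℤ // ξ ≠ 0}) : ℂ :=
  2 * (Real.pi : ℂ) * Complex.I * ∑ i : Fin n, (ξ.1 i : ℂ) * w ξ i

/-!
For `ŵ(ξ) = c ξ` one has `∑ᵢ |ŵᵢ(ξ)|² = |c|² |ξ|²` and `ĥ(ξ) = 2πi c |ξ|²`, hence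
`ϱ(ξ)^{2s} |ĥ(ξ)|² = |ξ|² / (1 + |ξ|²) · ϱ(ξ)^{2(s+1)} ∑ᵢ |ŵᵢ(ξ)|²`, and the factor lies in
`[1/2, 1)` because `|ξ| ≥ 1` on `ℤⁿ ∖ {0}`. So both norm bounds hold termwise, and the inverse
of the divergence is explicit: `ĥ ↦ ĥ(ξ) ξ / (2πi |ξ|²)`, the Fourier form of `∇Δ⁻¹`.
-/

open Real Complex

lemma sum_sq_pos_of_ne_zero {ι R : Type*} [Fintype ι] [Ring R] [LinearOrder R]
    [IsStrictOrderedRing R] {f : ι → R} (hf : f ≠ 0) : 0 < ∑ i, f i ^ 2 := by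
  obtain ⟨j, hj⟩ := Function.ne_iff.mp hf
  exact Finset.sum_pos' (fun i _ => sq_nonneg _) ⟨j, Finset.mem_univ j, sq_pos_of_ne_zero hj⟩

lemma one_le_sum_sq_intCast {ι : Type*} [Fintype ι] {ξ : ι → ℤ} (hξ : ξ ≠ 0) :
    1 ≤ ∑ i, (ξ i : ℝ) ^ 2 :=
  mod_cast Int.cast_one_le_of_pos (R := ℝ) (sum_sq_pos_of_ne_zero hξ)

lemma sum_sq_intCast_ne_zero {ι : Type*} [Fintype ι] {ξ : ι → ℤ} (hξ : ξ ≠ 0) :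
    ∑ i, (ξ i : ℂ) ^ 2 ≠ 0 :=
  mod_cast (sum_sq_pos_of_ne_zero hξ).ne'

namespace PeriodicSobolev

variable {n : ℕ}

lemma varrho_pos (ξ : Fin n → ℤ) : 0 < varrho ξ := by
  unfold varrho
  have : 0 < √(1 + ∑ i, (ξ i : ℝ) ^ 2) := Real.sqrt_pos.mpr (by positivity)
  positivity

lemma varrho_rpow_two_mul_add_one (ξ : Fin n → ℤ) (s : ℝ) :
    varrho ξ ^ (2 * (s + 1)) = varrho ξ ^ (2 * s) * ((2 * π) ^ 2 * (1 + ∑ i, (ξ i : ℝ) ^ 2)) := by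
  rw [mul_add, mul_one, Real.rpow_add (varrho_pos ξ), Real.rpow_two, varrho, mul_pow,
    Real.sq_sqrt (by positivity)]

section Parallel

variable {w : {ξ : Fin n → ℤ // ξ ≠ 0} → Fin n → ℂ} {ξ : {ξ : Fin n → ℤ // ξ ≠ 0}} {c : ℂ}

lemma fourierDiv_of_parallel (hw : w ξ = fun i => c * (ξ.1 i : ℂ)) :
    fourierDiv w ξ = 2 * π * I * c * ∑ i, (ξ.1 i : ℂ) ^ 2 := by
  simp only [fourierDiv, hw, Finset.mul_sum]
  exact Finset.sum_congr rfl fun i _ => by ring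

lemma norm_fourierDiv_sq_of_parallel (hw : w ξ = fun i => c * (ξ.1 i : ℂ)) :
    ‖fourierDiv w ξ‖ ^ 2 = (2 * π) ^ 2 * (∑ i, (ξ.1 i : ℝ) ^ 2) * ∑ i, ‖w ξ i‖ ^ 2 := by
  have hQ : ∑ i, (ξ.1 i : ℂ) ^ 2 = ((∑ i, (ξ.1 i : ℝ) ^ 2 : ℝ) : ℂ) := by push_cast; rfl
  have hw_norm : ∑ i, ‖w ξ i‖ ^ 2 = ‖c‖ ^ 2 * ∑ i, (ξ.1 i : ℝ) ^ 2 := by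
    simp only [hw, Finset.mul_sum, norm_mul, mul_pow, Complex.norm_intCast, sq_abs]
  rw [fourierDiv_of_parallel hw, hQ, hw_norm]
  simp only [norm_mul, Complex.norm_I, Complex.norm_real, Complex.norm_ofNat, Real.norm_eq_abs,
    abs_of_pos Real.pi_pos, abs_of_nonneg (Finset.sum_nonneg fun i _ => sq_nonneg (ξ.1 i : ℝ))]
  ring

lemma weighted_norm_fourierDiv_sq_le (s : ℝ) (hw : w ξ = fun i => c * (ξ.1 i : ℂ)) :
    varrho ξ.1 ^ (2 * s) * ‖fourierDiv w ξ‖ ^ 2 ≤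
      varrho ξ.1 ^ (2 * (s + 1)) * ∑ i, ‖w ξ i‖ ^ 2 := by
  rw [norm_fourierDiv_sq_of_parallel hw, varrho_rpow_two_mul_add_one]
  have := varrho_pos ξ.1
  set Q := ∑ i, (ξ.1 i : ℝ) ^ 2
  calc _ = varrho ξ.1 ^ (2 * s) * (2 * π) ^ 2 * (∑ i, ‖w ξ i‖ ^ 2) * Q := by ring
    _ ≤ varrho ξ.1 ^ (2 * s) * (2 * π) ^ 2 * (∑ i, ‖w ξ i‖ ^ 2) * (1 + Q) := by gcongr; linarith
    _ = _ := by ring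

lemma weighted_sum_norm_sq_le_two_mul (s : ℝ) (hw : w ξ = fun i => c * (ξ.1 i : ℂ)) :
    varrho ξ.1 ^ (2 * (s + 1)) * ∑ i, ‖w ξ i‖ ^ 2 ≤
      2 * (varrho ξ.1 ^ (2 * s) * ‖fourierDiv w ξ‖ ^ 2) := by
  rw [norm_fourierDiv_sq_of_parallel hw, varrho_rpow_two_mul_add_one]
  have := varrho_pos ξ.1
  have hQ := one_le_sum_sq_intCast ξ.2
  set Q := ∑ i, (ξ.1 i : ℝ) ^ 2
  calc _ = varrho ξ.1 ^ (2 * s) * (2 * π) ^ 2 * (∑ i, ‖w ξ i‖ ^ 2) * (1 + Q) := by ring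
    _ ≤ varrho ξ.1 ^ (2 * s) * (2 * π) ^ 2 * (∑ i, ‖w ξ i‖ ^ 2) * (2 * Q) := by gcongr; linarith
    _ = _ := by ring

end Parallel

variable (n) in
def homSobolev (s : ℝ) : Set ({ξ : Fin n → ℤ // ξ ≠ 0} → ℂ) :=
  {h | Summable fun ξ : {ξ : Fin n → ℤ // ξ ≠ 0} => varrho ξ.1 ^ (2 * s) * ‖h ξ‖ ^ 2}

variable (n) in
def gradHomSobolev (s : ℝ) : Set ({ξ : Fin n → ℤ // ξ ≠ 0} → Fin n → ℂ) :=
  {w | (∀ ξ : {ξ : Fin n → ℤ // ξ ≠ 0}, ∃ c : ℂ, w ξ = fun i => c * (ξ.1 i : ℂ)) ∧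
    Summable fun ξ : {ξ : Fin n → ℤ // ξ ≠ 0} => varrho ξ.1 ^ (2 * s) * ∑ i, ‖w ξ i‖ ^ 2}

noncomputable def fourierGradInvLap (h : {ξ : Fin n → ℤ // ξ ≠ 0} → ℂ)
    (ξ : {ξ : Fin n → ℤ // ξ ≠ 0}) : Fin n → ℂ :=
  fun i => h ξ / (2 * π * I * ∑ j, (ξ.1 j : ℂ) ^ 2) * ξ.1 i

lemma fourierDiv_fourierGradInvLap (h : {ξ : Fin n → ℤ // ξ ≠ 0} → ℂ) :
    fourierDiv (fourierGradInvLap h) = h := by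
  funext ξ
  have hQ := sum_sq_intCast_ne_zero ξ.2
  rw [fourierDiv_of_parallel rfl]
  field_simp

lemma fourierGradInvLap_fourierDiv_of_parallel {w : {ξ : Fin n → ℤ // ξ ≠ 0} → Fin n → ℂ}
    {ξ : {ξ : Fin n → ℤ // ξ ≠ 0}} {c : ℂ} (hw : w ξ = fun i => c * (ξ.1 i : ℂ)) :
    fourierGradInvLap (fourierDiv w) ξ = w ξ := by
  have hQ := sum_sq_intCast_ne_zero ξ.2
  rw [hw]
  funext i
  simp only [fourierGradInvLap, fourierDiv_of_parallel hw]
  field_simp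

lemma summable_weighted_norm_fourierDiv_sq {s : ℝ} {w : {ξ : Fin n → ℤ // ξ ≠ 0} → Fin n → ℂ}
    (hw : w ∈ gradHomSobolev n (s + 1)) :
    Summable fun ξ : {ξ : Fin n → ℤ // ξ ≠ 0} => varrho ξ.1 ^ (2 * s) * ‖fourierDiv w ξ‖ ^ 2 :=
  hw.2.of_nonneg_of_le (fun ξ => by have := varrho_pos ξ.1; positivity)
    fun ξ => weighted_norm_fourierDiv_sq_le s (hw.1 ξ).choose_spec

lemma mapsTo_fourierDiv (s : ℝ) :
    Set.MapsTo fourierDiv (gradHomSobolev n (s + 1)) (homSobolev n s) :=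
  fun _ hw => summable_weighted_norm_fourierDiv_sq hw

lemma mapsTo_fourierGradInvLap (s : ℝ) :
    Set.MapsTo fourierGradInvLap (homSobolev n s) (gradHomSobolev n (s + 1)) := by
  intro h hh
  refine ⟨fun ξ => ⟨_, rfl⟩, (hh.mul_left 2).of_nonneg_of_le
    (fun ξ => by have := varrho_pos ξ.1; positivity) fun ξ => ?_⟩
  simpa only [fourierDiv_fourierGradInvLap] using
    weighted_sum_norm_sq_le_two_mul s (w := fourierGradInvLap h) (ξ := ξ) rfl

lemma invOn_fourierGradInvLap_fourierDiv (s : ℝ) :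
    Set.InvOn fourierGradInvLap fourierDiv (gradHomSobolev n (s + 1)) (homSobolev n s) :=
  ⟨fun _ hw => funext fun ξ => fourierGradInvLap_fourierDiv_of_parallel (hw.1 ξ).choose_spec,
    fun h _ => fourierDiv_fourierGradInvLap h⟩

end PeriodicSobolev

open PeriodicSobolev

theorem fourier_divergence_isomorphism_general
    (n : ℕ) (s : ℝ) :
    Set.BijOn (fun w => fourierDiv (n := n) w)
      {w : {ξ : Fin n → ℤ // ξ ≠ 0} → Fin n → ℂ |
        (∀ ξ : {ξ : Fin n → ℤ // ξ ≠ 0}, ∃ c : ℂ, w ξ = fun i => c * (ξ.1 i : ℂ)) ∧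
        Summable fun ξ : {ξ : Fin n → ℤ // ξ ≠ 0} =>
          varrho ξ.1 ^ (2 * (s + 1)) * ∑ i : Fin n, ‖w ξ i‖ ^ 2}
      {h : {ξ : Fin n → ℤ // ξ ≠ 0} → ℂ |
        Summable fun ξ : {ξ : Fin n → ℤ // ξ ≠ 0} =>
          varrho ξ.1 ^ (2 * s) * ‖h ξ‖ ^ 2} ∧
    ∀ w : {ξ : Fin n → ℤ // ξ ≠ 0} → Fin n → ℂ,
      (∀ ξ : {ξ : Fin n → ℤ // ξ ≠ 0}, ∃ c : ℂ, w ξ = fun i => c * (ξ.1 i : ℂ)) →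
      (Summable fun ξ : {ξ : Fin n → ℤ // ξ ≠ 0} =>
        varrho ξ.1 ^ (2 * (s + 1)) * ∑ i : Fin n, ‖w ξ i‖ ^ 2) →
      (1 / 2) * (∑' ξ : {ξ : Fin n → ℤ // ξ ≠ 0},
          varrho ξ.1 ^ (2 * (s + 1)) * ∑ i : Fin n, ‖w ξ i‖ ^ 2) ≤
        (∑' ξ : {ξ : Fin n → ℤ // ξ ≠ 0},
          varrho ξ.1 ^ (2 * s) * ‖fourierDiv w ξ‖ ^ 2) ∧
      (∑' ξ : {ξ : Fin n → ℤ // ξ ≠ 0},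
          varrho ξ.1 ^ (2 * s) * ‖fourierDiv w ξ‖ ^ 2) ≤
        ∑' ξ : {ξ : Fin n → ℤ // ξ ≠ 0},
          varrho ξ.1 ^ (2 * (s + 1)) * ∑ i : Fin n, ‖w ξ i‖ ^ 2 := by
  refine ⟨(invOn_fourierGradInvLap_fourierDiv s).bijOn (mapsTo_fourierDiv s)
    (mapsTo_fourierGradInvLap s), fun w hpar hsum => ?_⟩
  have hdiv := summable_weighted_norm_fourierDiv_sq (s := s) ⟨hpar, hsum⟩
  constructor
  · have := hsum.tsum_le_tsum (fun ξ => weighted_sum_norm_sq_le_two_mul s (hpar ξ).choose_spec)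
      (hdiv.mul_left 2)
    rw [tsum_mul_left] at this
    linarith
  · exact hdiv.tsum_le_tsum (fun ξ => weighted_norm_fourierDiv_sq_le s (hpar ξ).choose_spec) hsum

/-- The divergence is an isomorphism from the gradient-type subspace
`Ḣ^{s+1}_{#g}` onto `Ḣ^s_#` (Lemma "div-grad-is", operator "2.37"), in Fourier
form: `ŵ ↦ (ĥ(ξ) = 2πi ξ·ŵ(ξ))` is a bijection from the vector sequences that
are pointwise parallel to `ξ` with `∑ ϱ^{2(s+1)}|ŵ|² < ∞` onto scalar
sequences with `∑ ϱ^{2s}|ĥ|² < ∞`, and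
`½ ∑ ϱ^{2(s+1)}|ŵ|² ≤ ∑ ϱ^{2s}|ĥ|² ≤ ∑ ϱ^{2(s+1)}|ŵ|²`. -/
theorem fourier_divergence_isomorphism
    (n : ℕ) (hn : 2 ≤ n) (s : ℝ) :
    Set.BijOn (fun w => fourierDiv (n := n) w)
      {w : {ξ : Fin n → ℤ // ξ ≠ 0} → Fin n → ℂ |
        (∀ ξ : {ξ : Fin n → ℤ // ξ ≠ 0}, ∃ c : ℂ, w ξ = fun i => c * (ξ.1 i : ℂ)) ∧
        Summable fun ξ : {ξ : Fin n → ℤ // ξ ≠ 0} =>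
          varrho ξ.1 ^ (2 * (s + 1)) * ∑ i : Fin n, ‖w ξ i‖ ^ 2}
      {h : {ξ : Fin n → ℤ // ξ ≠ 0} → ℂ |
        Summable fun ξ : {ξ : Fin n → ℤ // ξ ≠ 0} =>
          varrho ξ.1 ^ (2 * s) * ‖h ξ‖ ^ 2} ∧
    ∀ w : {ξ : Fin n → ℤ // ξ ≠ 0} → Fin n → ℂ,
      (∀ ξ : {ξ : Fin n → ℤ // ξ ≠ 0}, ∃ c : ℂ, w ξ = fun i => c * (ξ.1 i : ℂ)) →
      (Summable fun ξ : {ξ : Fin n → ℤ // ξ ≠ 0} =>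
        varrho ξ.1 ^ (2 * (s + 1)) * ∑ i : Fin n, ‖w ξ i‖ ^ 2) →
      (1 / 2) * (∑' ξ : {ξ : Fin n → ℤ // ξ ≠ 0},
          varrho ξ.1 ^ (2 * (s + 1)) * ∑ i : Fin n, ‖w ξ i‖ ^ 2) ≤
        (∑' ξ : {ξ : Fin n → ℤ // ξ ≠ 0},
          varrho ξ.1 ^ (2 * s) * ‖fourierDiv w ξ‖ ^ 2) ∧
      (∑' ξ : {ξ : Fin n → ℤ // ξ ≠ 0},
          varrho ξ.1 ^ (2 * s) * ‖fourierDiv w ξ‖ ^ 2) ≤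
        ∑' ξ : {ξ : Fin n → ℤ // ξ ≠ 0},
          varrho ξ.1 ^ (2 * (s + 1)) * ∑ i : Fin n, ‖w ξ i‖ ^ 2 :=
  fourier_divergence_isomorphism_general n s
end
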